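/- Let f : X → Y be a continuous surjection between digital images. Then f is shy if and only if the multivalued inverse f⁻¹ : Y ⊸ X, given by f⁻¹(y) = {x ∈ X : f(x) = y}, is connectivity preserving. -/

import Mathlib

/-- A subset `A` is connected under adjacency `adj`: any two of its points are
joined by a path of consecutively adjacent points lying in `A`. -/
def ConnIn {X : Type*} (adj : X → X → Prop) (A : Set X) : Prop :=
  ∀ a ∈ A, ∀ b ∈ A,
    Relation.ReflTransGen (fun u v => adj u v ∧ u ∈ A ∧ v ∈ A) a b

/-- Two subsets are adjacent if they contain points that are equal or adjacent. -/
def AdjSets {X : Type*} (adj : X → X → Prop) (A B : Set X) : Prop :=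
  ∃ a ∈ A, ∃ b ∈ B, a = b ∨ adj a b

/-- Image of a set under a multivalued function. -/
def imageMV {X Y : Type*} (F : X → Set Y) (A : Set X) : Set Y :=
  ⋃ x ∈ A, F x

/-- A multivalued function is connectivity preserving if images of connected
sets are connected. -/
def ConnPres {X Y : Type*} (adjX : X → X → Prop) (adjY : Y → Y → Prop)
    (F : X → Set Y) : Prop :=
  ∀ A : Set X, ConnIn adjX A → ConnIn adjY (imageMV F A)

/-! A path in `Y` inside a connected set `A` lifts to a path in `X` inside `f⁻¹ A`: at each step
`u → c` of the path, surjectivity provides a point over `u`, and the connectedness of `f⁻¹{u, c}`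
joins it to any point over `c`. Conversely, singletons and adjacent pairs are connected, and
`f⁻¹` sends them to the fibres and to the preimages of adjacent pairs. -/

section

variable {X Y : Type*}

theorem ConnIn.reflTransGen_of_subset {adj : X → X → Prop} {A B : Set X} (hA : ConnIn adj A)
    (hAB : A ⊆ B) {a b : X} (ha : a ∈ A) (hb : b ∈ A) :
    Relation.ReflTransGen (fun u v => adj u v ∧ u ∈ B ∧ v ∈ B) a b :=
  Relation.ReflTransGen.mono (fun _ _ ⟨huv, hu, hv⟩ => ⟨huv, hAB hu, hAB hv⟩) _ _ (hA a ha b hb)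

theorem connIn_singleton (adj : X → X → Prop) (x : X) : ConnIn adj {x} := by
  rintro a rfl b rfl
  exact .refl

theorem connIn_pair {adj : X → X → Prop} (hsym : ∀ a b, adj a b → adj b a) {x₀ x₁ : X}
    (h : adj x₀ x₁) : ConnIn adj {x₀, x₁} := by
  rintro _ (rfl | rfl) _ (rfl | rfl)
  · exact .refl
  · exact .single ⟨h, by simp, by simp⟩
  · exact .single ⟨hsym _ _ h, by simp, by simp⟩
  · exact .refl

theorem imageMV_fiber (f : X → Y) (A : Set Y) :
    imageMV (fun y => f ⁻¹' {y}) A = f ⁻¹' A := by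
  ext x
  simp [imageMV]

variable {adjX : X → X → Prop} {adjY : Y → Y → Prop} {f : X → Y}

theorem reflTransGen_preimage_of_reflTransGen (hsurj : Function.Surjective f)
    (hfib : ∀ y, ConnIn adjX (f ⁻¹' {y}))
    (hpair : ∀ y₀ y₁, adjY y₀ y₁ → ConnIn adjX (f ⁻¹' {y₀, y₁}))
    {A : Set Y} {a : X} {y : Y}
    (hy : Relation.ReflTransGen (fun u v => adjY u v ∧ u ∈ A ∧ v ∈ A) (f a) y)
    (ha : f a ∈ A) {b : X} (hb : f b = y) :
    Relation.ReflTransGen (fun u v => adjX u v ∧ u ∈ f ⁻¹' A ∧ v ∈ f ⁻¹' A) a b := by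
  induction hy generalizing b with
  | refl =>
    exact (hfib (f a)).reflTransGen_of_subset
      (Set.preimage_mono (Set.singleton_subset_iff.2 ha)) rfl hb
  | @tail u c _ huc ih =>
    obtain ⟨hadj, hu, hc⟩ := huc
    obtain ⟨a', rfl⟩ := hsurj u
    have hsub : f ⁻¹' {f a', c} ⊆ f ⁻¹' A :=
      Set.preimage_mono (Set.insert_subset hu (Set.singleton_subset_iff.2 hc))
    exact (ih rfl).trans <|
      (hpair _ _ hadj).reflTransGen_of_subset hsub (by simp) (by simp [hb])

theorem connIn_preimage (hsurj : Function.Surjective f)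
    (hfib : ∀ y, ConnIn adjX (f ⁻¹' {y}))
    (hpair : ∀ y₀ y₁, adjY y₀ y₁ → ConnIn adjX (f ⁻¹' {y₀, y₁}))
    {A : Set Y} (hA : ConnIn adjY A) : ConnIn adjX (f ⁻¹' A) :=
  fun _ ha _ hb => reflTransGen_preimage_of_reflTransGen hsurj hfib hpair (hA _ ha _ hb) ha rfl

end

theorem shy_iff_inverse_connectivity_preserving_general {X Y : Type*}
    (adjX : X → X → Prop) (adjY : Y → Y → Prop)
    (hsymY : ∀ a b, adjY a b → adjY b a)
    (f : X → Y)
    (hsurj : Function.Surjective f) :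
    ((∀ y : Y, ConnIn adjX (f ⁻¹' {y})) ∧
     (∀ y₀ y₁, adjY y₀ y₁ → ConnIn adjX (f ⁻¹' {y₀, y₁}))) ↔
    ConnPres adjY adjX (fun y => f ⁻¹' {y}) := by
  constructor
  · rintro ⟨hfib, hpair⟩ A hA
    rw [imageMV_fiber]
    exact connIn_preimage hsurj hfib hpair hA
  · intro hpres
    refine ⟨fun y => ?_, fun y₀ y₁ h => ?_⟩
    · simpa only [imageMV_fiber] using hpres _ (connIn_singleton adjY y)
    · simpa only [imageMV_fiber] using hpres _ (connIn_pair hsymY h)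

theorem shy_iff_inverse_connectivity_preserving {X Y : Type*}
    (adjX : X → X → Prop) (adjY : Y → Y → Prop)
    (hsymX : ∀ a b, adjX a b → adjX b a) (hirrX : ∀ a, ¬ adjX a a)
    (hsymY : ∀ a b, adjY a b → adjY b a) (hirrY : ∀ a, ¬ adjY a a)
    (f : X → Y)
    (hcont : ∀ x x', adjX x x' → f x = f x' ∨ adjY (f x) (f x'))
    (hsurj : Function.Surjective f) :
    ((∀ y : Y, ConnIn adjX (f ⁻¹' {y})) ∧
     (∀ y₀ y₁, adjY y₀ y₁ → ConnIn adjX (f ⁻¹' {y₀, y₁}))) ↔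
    ConnPres adjY adjX (fun y => f ⁻¹' {y}) :=
  shy_iff_inverse_connectivity_preserving_general adjX adjY hsymY f hsurj
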